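/- arXiv:1805.05808 — 2 statements merged into one kernel-verified Lean document; each statement's English description precedes it below -/
import Mathlib

section
/- Let G be a connected graph and 0 ≤ α < 1. Let u, v be vertices and suppose N ⊆ N(v) \ (N(u) ∪ {u}) is nonempty. Let G' be obtained from G by deleting the edges {v,w} for w ∈ N and adding the edges {u,w} for w ∈ N. Let x be a unit Perron eigenvector of A_α(G) with eigenvalue ρ_α(G). If x_u ≥ x_v, then ρ_α(G') > ρ_α(G). -/
/-!
The Perron vector `x` of `A_α(G)` realises `ρ_α(G)` as the maximum of the Rayleigh quotient of
`A_α(G)`. Rotating the edges `vw`, `w ∈ N`, to `uw` changes the quadratic form at `x` by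
`∑_{w ∈ N} (α (x_u² - x_v²) + 2 (1 - α) x_w (x_u - x_v)) ≥ 0`, so `ρ_α(G') ≥ ρ_α(G)`. If equality
held, `x` would maximise the Rayleigh quotient of `A_α(G')` too, hence be an eigenvector of
`A_α(G')` for `ρ_α(G)`; but the `u`-th entries of `A_α(G') x` and `A_α(G) x` differ by
`∑_{w ∈ N} (α x_u + (1 - α) x_w) > 0`, as `x` is positive on the connected graph `G`.
-/

open Matrix

/-- The `A_α` matrix of a simple graph: `α·D(G) + (1-α)·A(G)`. -/
noncomputable def Aalpha {V : Type*} [Fintype V] (G : SimpleGraph V) (α : ℝ) :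
    Matrix V V ℝ :=
  letI : DecidableEq V := Classical.decEq V
  letI : DecidableRel G.Adj := Classical.decRel _
  α • Matrix.diagonal (fun v => (G.degree v : ℝ)) + (1 - α) • G.adjMatrix ℝ

/-- The largest real eigenvalue of a matrix (spectral radius for `A_α`-matrices). -/
noncomputable def specRad {V : Type*} [Fintype V] [DecidableEq V] (M : Matrix V V ℝ) : ℝ :=
  sSup {t : ℝ | Module.End.HasEigenvalue (Matrix.toLin' M) t}

namespace Matrix

variable {n : Type*} [Fintype n] [DecidableEq n] {M : Matrix n n ℝ}

theorem hasEigenvalue_toEuclideanLin_iff {μ : ℝ} :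
    Module.End.HasEigenvalue (toEuclideanLin M) μ ↔ Module.End.HasEigenvalue (toLin' M) μ := by
  rw [Module.End.hasEigenvalue_iff_mem_spectrum, Module.End.hasEigenvalue_iff_mem_spectrum,
    spectrum_toLin', toEuclideanLin, spectrum_toLpLin]

theorem bddAbove_rayleigh_toEuclideanLin (M : Matrix n n ℝ) :
    BddAbove (Set.range fun z : {z : EuclideanSpace ℝ n // z ≠ 0} ↦
      RCLike.re (inner ℝ (toEuclideanLin M z) z) / ‖(z : EuclideanSpace ℝ n)‖ ^ 2) := by
  refine ⟨‖LinearMap.toContinuousLinearMap (toEuclideanLin M)‖, ?_⟩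
  rintro _ ⟨z, rfl⟩
  have := (le_abs_self _).trans (ContinuousLinearMap.rayleighQuotient_le_norm
    (LinearMap.toContinuousLinearMap (toEuclideanLin M)) z)
  simpa [ContinuousLinearMap.rayleighQuotient, ContinuousLinearMap.reApplyInnerSelf] using this

namespace IsHermitian

theorem specRad_eq_iSup_rayleigh [Nonempty n] (hM : M.IsHermitian) :
    specRad M = ⨆ z : {z : EuclideanSpace ℝ n // z ≠ 0},
      RCLike.re (inner ℝ (toEuclideanLin M z) z) / ‖(z : EuclideanSpace ℝ n)‖ ^ 2 := by
  refine IsGreatest.csSup_eq ⟨hasEigenvalue_toEuclideanLin_iff.mp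
    (isSymmetric_toEuclideanLin_iff.mpr hM).hasEigenvalue_iSup_of_finiteDimensional, ?_⟩
  intro t ht
  obtain ⟨z, hz, hz0⟩ := (hasEigenvalue_toEuclideanLin_iff.mpr ht).exists_hasEigenvector
  refine le_of_eq_of_le ?_ (le_ciSup (bddAbove_rayleigh_toEuclideanLin M) ⟨z, hz0⟩)
  rw [Module.End.mem_eigenspace_iff.mp hz, real_inner_smul_left, real_inner_self_eq_norm_sq]
  field_simp [norm_ne_zero_iff.mpr hz0]
  simp

theorem dotProduct_mulVec_le_specRad_mul (hM : M.IsHermitian) (w : n → ℝ) :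
    w ⬝ᵥ M *ᵥ w ≤ specRad M * (w ⬝ᵥ w) := by
  rcases eq_or_ne w 0 with rfl | hw
  · simp
  obtain ⟨i, -⟩ := Function.ne_iff.mp hw
  have : Nonempty n := ⟨i⟩
  let z : {z : EuclideanSpace ℝ n // z ≠ 0} := ⟨WithLp.toLp 2 w, by simpa using hw⟩
  have hz : 0 < ‖(z : EuclideanSpace ℝ n)‖ ^ 2 := pow_pos (norm_pos_iff.mpr z.2) 2
  have := le_ciSup (bddAbove_rayleigh_toEuclideanLin M) z
  rw [← hM.specRad_eq_iSup_rayleigh, div_le_iff₀ hz, EuclideanSpace.real_norm_sq_eq] at this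
  simpa [z, dotProduct, sq, EuclideanSpace.inner_toLp_toLp, mul_comm] using this

theorem posSemidef_specRad_smul_one_sub (hM : M.IsHermitian) :
    (specRad M • (1 : Matrix n n ℝ) - M).PosSemidef := by
  refine posSemidef_iff_dotProduct_mulVec.mpr
    ⟨(isHermitian_one.smul (IsSelfAdjoint.all _)).sub hM, fun w => ?_⟩
  have := hM.dotProduct_mulVec_le_specRad_mul w
  simp only [star_trivial, sub_mulVec, smul_mulVec, one_mulVec, dotProduct_sub, dotProduct_smul,
    smul_eq_mul]
  linarith

theorem mulVec_eq_specRad_smul_of_dotProduct_eq (hM : M.IsHermitian) {w : n → ℝ}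
    (hw : w ⬝ᵥ M *ᵥ w = specRad M * (w ⬝ᵥ w)) : M *ᵥ w = specRad M • w := by
  have h := (hM.posSemidef_specRad_smul_one_sub.dotProduct_mulVec_zero_iff w).mp (by
    simp only [star_trivial, sub_mulVec, smul_mulVec, one_mulVec, dotProduct_sub, dotProduct_smul,
      smul_eq_mul, hw, sub_self])
  rw [sub_mulVec, smul_mulVec, one_mulVec, sub_eq_zero] at h
  exact h.symm

end IsHermitian

end Matrix

namespace SimpleGraph

variable {V : Type*} (G : SimpleGraph V)

def edgeRotation (u v : V) (N : Set V) : SimpleGraph V :=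
  (G \ fromEdgeSet ((fun w => s(v, w)) '' N)) ⊔ fromEdgeSet ((fun w => s(u, w)) '' N)

theorem edgeRotation_adj {u v : V} {N : Set V} (hu : u ∉ N) {a b : V} :
    (G.edgeRotation u v N).Adj a b ↔
      (G.Adj a b ∧ ¬(a = v ∧ b ∈ N) ∧ ¬(b = v ∧ a ∈ N)) ∨ (a = u ∧ b ∈ N) ∨ (b = u ∧ a ∈ N) := by
  simp only [edgeRotation, sup_adj, sdiff_adj, fromEdgeSet_adj, Set.mem_image, Sym2.eq_iff]
  grind [G.ne_of_adj]

section Aalpha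

variable [Fintype V]

theorem isHermitian_Aalpha (α : ℝ) : (Aalpha G α).IsHermitian := by
  classical
  exact ((isHermitian_diagonal _).smul (IsSelfAdjoint.all _)).add
    ((G.isHermitian_adjMatrix ℝ).smul (IsSelfAdjoint.all _))

theorem Aalpha_mulVec_apply [DecidableRel G.Adj] (α : ℝ) (y : V → ℝ) (a : V) :
    (Aalpha G α *ᵥ y) a = ∑ b, if G.Adj a b then α * y a + (1 - α) * y b else 0 := by
  rw [← Finset.sum_filter, ← neighborFinset_eq_filter, Finset.sum_add_distrib, Finset.sum_const,
    card_neighborFinset_eq_degree, ← Finset.mul_sum]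
  simp only [Aalpha, add_mulVec, smul_mulVec, Pi.add_apply, Pi.smul_apply, smul_eq_mul,
    mulVec_diagonal, adjMatrix_mulVec_apply, nsmul_eq_mul]
  rw [mul_left_comm]
  congr!

/-- Zero entries of a nonnegative eigenvector propagate to neighbours because `α < 1`. -/
theorem pos_of_Aalpha_mulVec_eq_smul (hG : G.Preconnected) {α : ℝ} (hα : α < 1) {x : V → ℝ}
    (hx : ∀ w, 0 ≤ x w) (hx0 : x ≠ 0) {r : ℝ} (heig : Aalpha G α *ᵥ x = r • x) (w : V) :
    0 < x w := by
  classical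
  have hadj : ∀ a b, G.Adj a b → x a = 0 → x b = 0 := by
    intro a b hab ha
    have hrow := congrFun heig a
    rw [G.Aalpha_mulVec_apply, Pi.smul_apply, ha, smul_zero] at hrow
    have hb := (Finset.sum_eq_zero_iff_of_nonneg fun c _ => ?_).mp hrow b (Finset.mem_univ b)
    · simpa [hab, (sub_pos.mpr hα).ne'] using hb
    · split_ifs
      · simpa using mul_nonneg (sub_pos.mpr hα).le (hx c)
      · exact le_rfl
  have hreach : ∀ a b, G.Reachable a b → x a = 0 → x b = 0 := by
    rintro a b ⟨p⟩
    induction p with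
    | nil => exact id
    | cons hab _ ih => exact fun ha => ih (hadj _ _ hab ha)
  exact (hx w).lt_of_ne fun hw => hx0 (funext fun b => hreach w b (hG w b) hw.symm)

variable [DecidableEq V] {u v : V} {S : Finset V}

theorem sum_ite_edgeRotation_adj [DecidableRel G.Adj] [DecidableRel (G.edgeRotation u v S).Adj]
    (hS : (S : Set V) ⊆ G.neighborSet v \ (G.neighborSet u ∪ {u})) (a : V) (g : V → ℝ) :
    ∑ b, (if (G.edgeRotation u v S).Adj a b then g b else 0) =
      ∑ b, (if G.Adj a b then g b else 0) + (if a = u then ∑ b ∈ S, g b else 0)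
        + (if a ∈ S then g u else 0) - (if a = v then ∑ b ∈ S, g b else 0)
        - (if a ∈ S then g v else 0) := by
  have hSv : ∀ w ∈ S, G.Adj v w := fun w hw => (hS hw).1
  have hSu : ∀ w ∈ S, w ≠ u ∧ ¬G.Adj u w := fun w hw => by simpa [not_or] using (hS hw).2
  have hsummand : ∀ b, (if (G.edgeRotation u v S).Adj a b then g b else 0) =
      (if G.Adj a b then g b else 0) + (if a = u ∧ b ∈ S then g b else 0)
        + (if b = u ∧ a ∈ S then g b else 0) - (if a = v ∧ b ∈ S then g b else 0)
        - (if b = v ∧ a ∈ S then g b else 0) := by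
    intro b
    have hadj := G.edgeRotation_adj (u := u) (v := v) (N := S) (a := a) (b := b)
      (fun h => (hSu u h).1 rfl)
    simp only [Finset.mem_coe] at hadj
    split_ifs <;> grind [G.ne_of_adj, G.adj_symm]
  rw [Finset.sum_congr rfl fun b _ => hsummand b]
  simp [Finset.sum_add_distrib, Finset.sum_sub_distrib, ite_and, Finset.sum_ite_irrel,
    Finset.sum_ite_mem]

theorem Aalpha_edgeRotation_mulVec_apply
    (hS : (S : Set V) ⊆ G.neighborSet v \ (G.neighborSet u ∪ {u})) (α : ℝ) (y : V → ℝ) (a : V) :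
    (Aalpha (G.edgeRotation u v S) α *ᵥ y) a = (Aalpha G α *ᵥ y) a
      + (if a = u then ∑ w ∈ S, (α * y a + (1 - α) * y w) else 0)
      + (if a ∈ S then α * y a + (1 - α) * y u else 0)
      - (if a = v then ∑ w ∈ S, (α * y a + (1 - α) * y w) else 0)
      - (if a ∈ S then α * y a + (1 - α) * y v else 0) := by
  classical
  rw [Aalpha_mulVec_apply, Aalpha_mulVec_apply, sum_ite_edgeRotation_adj G hS]

theorem Aalpha_edgeRotation_mulVec_apply_left
    (hS : (S : Set V) ⊆ G.neighborSet v \ (G.neighborSet u ∪ {u})) (huv : u ≠ v) (α : ℝ)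
    (y : V → ℝ) :
    (Aalpha (G.edgeRotation u v S) α *ᵥ y) u =
      (Aalpha G α *ᵥ y) u + ∑ w ∈ S, (α * y u + (1 - α) * y w) := by
  have huS : u ∉ S := fun h => by simpa using (hS h).2
  simp [G.Aalpha_edgeRotation_mulVec_apply hS, huS, huv]

theorem dotProduct_Aalpha_edgeRotation_mulVec_sub
    (hS : (S : Set V) ⊆ G.neighborSet v \ (G.neighborSet u ∪ {u})) (α : ℝ) (y : V → ℝ) :
    y ⬝ᵥ Aalpha (G.edgeRotation u v S) α *ᵥ y - y ⬝ᵥ Aalpha G α *ᵥ y =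
      ∑ w ∈ S, (α * (y u ^ 2 - y v ^ 2) + 2 * (1 - α) * y w * (y u - y v)) := by
  rw [dotProduct, dotProduct, ← Finset.sum_sub_distrib]
  have hdistrib : ∀ c X P Q R T : ℝ,
      c * (X + P + Q - R - T) - c * X = c * P + c * Q - c * R - c * T := by
    intros; ring
  simp only [G.Aalpha_edgeRotation_mulVec_apply hS, hdistrib, mul_ite, mul_zero,
    Finset.sum_add_distrib, Finset.sum_sub_distrib, Finset.sum_ite_eq', Finset.mem_univ, if_true,
    Finset.sum_ite_mem, Finset.univ_inter]
  simp only [Finset.mul_sum, ← Finset.sum_add_distrib, ← Finset.sum_sub_distrib]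
  exact Finset.sum_congr rfl fun w _ => by ring

theorem dotProduct_Aalpha_mulVec_le_edgeRotation
    (hS : (S : Set V) ⊆ G.neighborSet v \ (G.neighborSet u ∪ {u})) {α : ℝ} (h0 : 0 ≤ α)
    (h1 : α ≤ 1) {y : V → ℝ} (hy : ∀ w, 0 ≤ y w) (hyuv : y v ≤ y u) :
    y ⬝ᵥ Aalpha G α *ᵥ y ≤ y ⬝ᵥ Aalpha (G.edgeRotation u v S) α *ᵥ y := by
  rw [← sub_nonneg, G.dotProduct_Aalpha_edgeRotation_mulVec_sub hS]
  refine Finset.sum_nonneg fun w _ => ?_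
  have hsq : 0 ≤ y u ^ 2 - y v ^ 2 := by nlinarith [hy v]
  have hcross : 0 ≤ y w * (y u - y v) := mul_nonneg (hy w) (by linarith)
  nlinarith

end Aalpha

end SimpleGraph

/-- Lemma of Nikiforov–Rojo: rotating the edges from `v` to `u`
over a set `N ⊆ N(v) \ (N(u) ∪ {u})` strictly increases the `A_α`-spectral radius,
provided the Perron entry at `u` is at least the one at `v`. -/
theorem specRad_Aalpha_edge_rotation {V : Type*} [Fintype V] [DecidableEq V]
    (G : SimpleGraph V) (hG : G.Connected) (α : ℝ) (h0 : 0 ≤ α) (h1 : α < 1)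
    (u v : V) (N : Set V) (hN : N ⊆ G.neighborSet v \ (G.neighborSet u ∪ {u}))
    (hNne : N.Nonempty)
    (x : V → ℝ)
    (hunit : ∑ w, x w ^ 2 = 1) (hnonneg : ∀ w, 0 ≤ x w)
    (heig : (Aalpha G α).mulVec x = specRad (Aalpha G α) • x)
    (hxuv : x v ≤ x u) :
    specRad (Aalpha G α) <
      specRad (Aalpha
        ((G \ SimpleGraph.fromEdgeSet ((fun w => s(v, w)) '' N)) ⊔
          SimpleGraph.fromEdgeSet ((fun w => s(u, w)) '' N)) α) := by
  obtain ⟨S, rfl⟩ := N.toFinite.exists_finset_coe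
  obtain ⟨w, hw⟩ := hNne
  change specRad (Aalpha G α) < specRad (Aalpha (G.edgeRotation u v S) α)
  have huv : u ≠ v := fun h => (hN hw).2 (Or.inl (h ▸ (hN hw).1))
  have hxx : x ⬝ᵥ x = 1 := by simpa [dotProduct, sq] using hunit
  have hx0 : x ≠ 0 := by rintro rfl; simp at hxx
  have hρ : x ⬝ᵥ Aalpha G α *ᵥ x = specRad (Aalpha G α) := by
    rw [heig, dotProduct_smul, hxx, smul_eq_mul, mul_one]
  have hM' := (G.edgeRotation u v S).isHermitian_Aalpha α
  have hrot := G.dotProduct_Aalpha_mulVec_le_edgeRotation hN h0 h1.le hnonneg hxuv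
  have hbound := hM'.dotProduct_mulVec_le_specRad_mul x
  rw [hxx, mul_one] at hbound
  have hle : specRad (Aalpha G α) ≤ specRad (Aalpha (G.edgeRotation u v S) α) :=
    hρ.symm.trans_le (hrot.trans hbound)
  refine hle.lt_of_ne fun heq => ?_
  have heig' := hM'.mulVec_eq_specRad_smul_of_dotProduct_eq (w := x)
    (by rw [hxx, mul_one]; linarith)
  have hrow := G.Aalpha_edgeRotation_mulVec_apply_left hN huv α x
  rw [heig, heig', ← heq, left_eq_add] at hrow
  have hpos := G.pos_of_Aalpha_mulVec_eq_smul hG.preconnected h1 hnonneg hx0 heig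
  refine (Finset.sum_pos (fun w _ => ?_) ⟨w, hw⟩).ne' hrow
  nlinarith [hpos u, hpos w]
end

section
/- Let G be a connected graph containing a pendent path with vertices v_1, v_2, ..., v_k labelled from the leaf v_1 inward (so d(v_1)=1 and d(v_i)=2 for 2 ≤ i ≤ k−1). Let 0 ≤ α < 1, suppose ρ_α(G) > 2, and let x be a positive Perron eigenvector of A_α(G). Then x_{v_i} < x_{v_{i+1}} for all 1 ≤ i ≤ k−1. -/
open Matrix

/-! Along a pendent path the eigen-equation of `A_α` at `v_i` reads
`(1-α) x_{i+1} = (ρ - α d(v_i)) x_i - (1-α) x_{i-1}` (with `x_0 = 0`). At the leaf this gives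
`(1-α) x_2 = (ρ - α) x_1 > (1-α) x_1` as soon as `ρ > 1`, and inductively, if
`x_{i-1} < x_i`, then `(1-α) x_{i+1} > (ρ - 1 - α) x_i ≥ (1-α) x_i` as soon as `ρ ≥ 2`. -/

namespace SimpleGraph

variable {V : Type*} (G : SimpleGraph V)

theorem neighborFinset_eq_singleton_of_degree_eq_one {u w : V} [Fintype (G.neighborSet u)]
    (hu : G.degree u = 1) (huw : G.Adj u w) : G.neighborFinset u = {w} := by
  obtain ⟨a, ha⟩ := Finset.card_eq_one.mp (G.card_neighborFinset_eq_degree u ▸ hu)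
  have hw : w ∈ G.neighborFinset u := (G.mem_neighborFinset u w).mpr huw
  rw [ha, Finset.mem_singleton] at hw
  rw [ha, hw]

theorem neighborFinset_eq_pair_of_degree_eq_two [DecidableEq V] {u p w : V}
    [Fintype (G.neighborSet u)] (hu : G.degree u = 2) (hup : G.Adj u p) (huw : G.Adj u w)
    (hpw : p ≠ w) : G.neighborFinset u = {p, w} := by
  have hsub : ({p, w} : Finset V) ⊆ G.neighborFinset u := by
    simp [Finset.insert_subset_iff, hup, huw]
  refine (Finset.eq_of_subset_of_card_le hsub ?_).symm
  rw [G.card_neighborFinset_eq_degree, hu, Finset.card_pair hpw]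

end SimpleGraph

section Aalpha

variable {V : Type*} [Fintype V] (G : SimpleGraph V) [DecidableRel G.Adj]

theorem Aalpha_mulVec_apply (α : ℝ) (x : V → ℝ) (u : V) :
    (Aalpha G α *ᵥ x) u =
      α * G.degree u * x u + (1 - α) * ∑ w ∈ G.neighborFinset u, x w := by
  classical
  unfold Aalpha
  simp only [add_mulVec, smul_mulVec, mulVec_diagonal, Pi.add_apply, Pi.smul_apply,
    smul_eq_mul, SimpleGraph.adjMatrix_mulVec_apply, mul_assoc]
  -- `Aalpha` is built with classical decidability instances; `congr!` matches them to ours.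
  congr!

variable {G}

theorem Aalpha_eigenvector_lt_of_degree_eq_one {α ρ : ℝ} (hα : α < 1) (hρ : 1 < ρ)
    {x : V → ℝ} {u w : V} (hx : (Aalpha G α *ᵥ x) u = ρ * x u) (hxu : 0 < x u)
    (hu : G.degree u = 1) (huw : G.Adj u w) : x u < x w := by
  rw [Aalpha_mulVec_apply, G.neighborFinset_eq_singleton_of_degree_eq_one hu huw,
    Finset.sum_singleton, hu, Nat.cast_one] at hx
  nlinarith

theorem Aalpha_eigenvector_lt_of_degree_eq_two [DecidableEq V] {α ρ : ℝ} (hα : α < 1)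
    (hρ : 2 ≤ ρ) {x : V → ℝ} {p u w : V} (hx : (Aalpha G α *ᵥ x) u = ρ * x u)
    (hxu : 0 ≤ x u) (hxpu : x p < x u) (hu : G.degree u = 2) (hup : G.Adj u p)
    (huw : G.Adj u w) (hpw : p ≠ w) : x u < x w := by
  rw [Aalpha_mulVec_apply, G.neighborFinset_eq_pair_of_degree_eq_two hu hup huw hpw,
    Finset.sum_pair hpw, hu, Nat.cast_ofNat] at hx
  nlinarith

end Aalpha

theorem perron_increasing_on_pendent_path_general {V : Type*} [Fintype V] [DecidableEq V]
    (G : SimpleGraph V) [DecidableRel G.Adj]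
    (α : ℝ) (h1 : α < 1)
    (k : ℕ) (v : Fin k → V) (hinj : Function.Injective v)
    (hadj : ∀ i j : Fin k, i.val + 1 = j.val → G.Adj (v i) (v j))
    (hleaf : ∀ i : Fin k, i.val = 0 → G.degree (v i) = 1)
    (hinternal : ∀ i : Fin k, 0 < i.val → i.val < k - 1 → G.degree (v i) = 2)
    (hρ : 2 < specRad (Aalpha G α))
    (x : V → ℝ) (hpos : ∀ w, 0 < x w)
    (heig : (Aalpha G α).mulVec x = specRad (Aalpha G α) • x) :
    ∀ i j : Fin k, i.val + 1 = j.val → x (v i) < x (v j) := by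
  have hev (u : V) : (Aalpha G α *ᵥ x) u = specRad (Aalpha G α) * x u := congrFun heig u
  rintro ⟨n, hn⟩ j hij
  induction n generalizing j with
  | zero =>
    exact Aalpha_eigenvector_lt_of_degree_eq_one h1 (by linarith) (hev _) (hpos _)
      (hleaf _ rfl) (hadj _ _ hij)
  | succ n ih =>
    have hprev := ih (by omega) ⟨n + 1, hn⟩ rfl
    have hne : v ⟨n, by omega⟩ ≠ v j :=
      hinj.ne (by rw [Ne, Fin.ext_iff]; simp only at hij ⊢; omega)
    exact Aalpha_eigenvector_lt_of_degree_eq_two h1 hρ.le (hev _) (hpos _).le hprev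
      (hinternal _ n.succ_pos (by have := j.isLt; omega)) (hadj _ _ rfl).symm (hadj _ _ hij) hne

/-- along a pendent path `v_1 v_2 ⋯ v_k` (labelled from the leaf inward)
of a connected graph with `ρ_α(G) > 2`, the entries of the Perron vector strictly
increase. -/
theorem perron_increasing_on_pendent_path {V : Type*} [Fintype V] [DecidableEq V]
    (G : SimpleGraph V) [DecidableRel G.Adj] (hG : G.Connected)
    (α : ℝ) (h0 : 0 ≤ α) (h1 : α < 1)
    (k : ℕ) (v : Fin k → V) (hinj : Function.Injective v)
    (hadj : ∀ i j : Fin k, i.val + 1 = j.val → G.Adj (v i) (v j))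
    (hleaf : ∀ i : Fin k, i.val = 0 → G.degree (v i) = 1)
    (hinternal : ∀ i : Fin k, 0 < i.val → i.val < k - 1 → G.degree (v i) = 2)
    (hρ : 2 < specRad (Aalpha G α))
    (x : V → ℝ) (hpos : ∀ w, 0 < x w)
    (heig : (Aalpha G α).mulVec x = specRad (Aalpha G α) • x) :
    ∀ i j : Fin k, i.val + 1 = j.val → x (v i) < x (v j) :=
  perron_increasing_on_pendent_path_general G α h1 k v hinj hadj hleaf hinternal hρ x hpos heig
end
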